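/- Let λ_{i1} > 0, λ_{i2} > 0, μ_i > 0 for i = 1, 2. If λ₁₁ ≤ λ₂₁, μ₁ ≥ μ₂ and λ₁₂ μ₂ ≤ λ₂₂ μ₁ (i.e. λ₁₂/λ₂₂ ≤ μ₁/μ₂), then r^{W*}_1(t) ≤ r^{W*}_2(t) for all t ≥ 0, i.e. τ^{W*}_1 ≥_hr τ^{W*}_2. -/
import Mathlib


/-- `a_i = sqrt((λ_{i2} + μ_i)² + 4 λ_{i1} μ_i)` for the warm standby system. -/
noncomputable def aW (l1 l2 m : ℝ) : ℝ := Real.sqrt ((l2 + m) ^ 2 + 4 * l1 * m)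

/-- Hazard rate of the lifetime of the Markovian two-unit warm standby system
starting with one unit working and the other under repair. -/
noncomputable def rWstar (l1 l2 m t : ℝ) : ℝ :=
  l1 * (aW l1 l2 m + (l2 - m) * Real.tanh (aW l1 l2 m * t / 2)) /
    (aW l1 l2 m + (l2 + m) * Real.tanh (aW l1 l2 m * t / 2))

lemma my_tanh_nonneg {x : ℝ} (hx : 0 ≤ x) : 0 ≤ Real.tanh x := by
  rw [Real.tanh_eq_sinh_div_cosh]
  exact div_nonneg (Real.sinh_nonneg_iff.2 hx) (Real.cosh_pos x).le

lemma my_tanh_le_one (x : ℝ) : Real.tanh x ≤ 1 := by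
  rw [Real.tanh_eq_sinh_div_cosh]
  exact (div_le_one (Real.cosh_pos x)).2 (le_of_lt (Real.sinh_lt_cosh x))

lemma my_tanh_mono {x y : ℝ} (hxy : x ≤ y) : Real.tanh x ≤ Real.tanh y := by
  rw [Real.tanh_eq_sinh_div_cosh, Real.tanh_eq_sinh_div_cosh,
    div_le_div_iff₀ (Real.cosh_pos x) (Real.cosh_pos y)]
  have h1 : Real.sinh (x - y) ≤ 0 := Real.sinh_nonpos_iff.2 (by linarith)
  have h2 := Real.sinh_sub x y
  linarith [h2 ▸ h1]

lemma my_hasDerivAt_tanh (x : ℝ) : HasDerivAt Real.tanh (1 / Real.cosh x ^ 2) x := by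
  have h := (Real.hasDerivAt_sinh x).div (Real.hasDerivAt_cosh x) (Real.cosh_pos x).ne'
  have e : (Real.cosh x * Real.cosh x - Real.sinh x * Real.sinh x) / Real.cosh x ^ 2
      = 1 / Real.cosh x ^ 2 := by
    have h1 := Real.cosh_sq_sub_sinh_sq x
    congr 1
    nlinarith [h1]
  rw [show Real.tanh = fun y => Real.sinh y / Real.cosh y from
    funext fun y => Real.tanh_eq_sinh_div_cosh y]
  exact e ▸ h

lemma my_tanh_mul_le {k x : ℝ} (hk : 1 ≤ k) (hx : 0 ≤ x) :
    Real.tanh (k * x) ≤ k * Real.tanh x := by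
  set f : ℝ → ℝ := fun y => k * Real.tanh y - Real.tanh (k * y) with hf
  have hd : ∀ y : ℝ, HasDerivAt f (k * (1 / Real.cosh y ^ 2) - 1 / Real.cosh (k * y) ^ 2 * k) y := by
    intro y
    have h1 : HasDerivAt (fun y : ℝ => k * y) k y := by
      simpa using (hasDerivAt_id y).const_mul k
    have h2 : HasDerivAt (fun y : ℝ => Real.tanh (k * y)) (1 / Real.cosh (k * y) ^ 2 * k) y :=
      (my_hasDerivAt_tanh (k * y)).comp y h1
    exact ((my_hasDerivAt_tanh y).const_mul k).sub h2
  have hmono : MonotoneOn f (Set.Ici (0 : ℝ)) := by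
    apply monotoneOn_of_deriv_nonneg (convex_Ici 0)
    · exact fun y _ => ((hd y).differentiableAt).continuousAt.continuousWithinAt
    · exact fun y _ => ((hd y).differentiableAt).differentiableWithinAt
    · intro y hy
      rw [(hd y).deriv]
      have hy0 : 0 < y := by simpa [interior_Ici] using hy
      have hcc : Real.cosh y ≤ Real.cosh (k * y) := by
        rw [Real.cosh_le_cosh]
        rw [abs_of_pos hy0, abs_of_pos (by nlinarith : (0:ℝ) < k * y)]
        nlinarith
      have hcp := Real.cosh_pos y
      have hcp2 := Real.cosh_pos (k * y)
      have : 1 / Real.cosh (k * y) ^ 2 ≤ 1 / Real.cosh y ^ 2 := by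
        apply one_div_le_one_div_of_le (by positivity)
        nlinarith
      nlinarith
  have h0 : f 0 ≤ f x := hmono Set.self_mem_Ici hx hx
  have hf0 : f 0 = 0 := by simp [hf]
  have := hf0 ▸ h0
  simp only [hf] at this
  linarith

/-- Key lemma: if `0 < α`, `0 < β`, `0 ≤ c`, `0 ≤ m2 ≤ m1` and `m2 * α ≤ m1 * β`, then
`m2 * α * tanh (β * c) ≤ m1 * β * tanh (α * c)`. -/
lemma key_tanh (α β c m1 m2 : ℝ) (hα : 0 < α) (hβ : 0 < β) (hc : 0 ≤ c)
    (hm2 : 0 ≤ m2) (hm : m2 ≤ m1) (hmab : m2 * α ≤ m1 * β) :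
    m2 * α * Real.tanh (β * c) ≤ m1 * β * Real.tanh (α * c) := by
  have htαc : 0 ≤ Real.tanh (α * c) := my_tanh_nonneg (mul_nonneg hα.le hc)
  have htβc : 0 ≤ Real.tanh (β * c) := my_tanh_nonneg (mul_nonneg hβ.le hc)
  rcases le_total α β with hab | hab
  · have hk : 1 ≤ β / α := (one_le_div hα).2 hab
    have h1 : Real.tanh (β * c) ≤ β / α * Real.tanh (α * c) := by
      have h := my_tanh_mul_le hk (mul_nonneg hα.le hc)
      have he : β / α * (α * c) = β * c := by field_simp
      rwa [he] at h
    rw [div_mul_eq_mul_div] at h1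
    have h1b : Real.tanh (β * c) * α ≤ β * Real.tanh (α * c) := (le_div_iff₀ hα).1 h1
    have h2 : m2 * (Real.tanh (β * c) * α) ≤ m2 * (β * Real.tanh (α * c)) :=
      mul_le_mul_of_nonneg_left h1b hm2
    have h3 : m2 * (β * Real.tanh (α * c)) ≤ m1 * (β * Real.tanh (α * c)) :=
      mul_le_mul_of_nonneg_right hm (mul_nonneg hβ.le htαc)
    calc m2 * α * Real.tanh (β * c) = m2 * (Real.tanh (β * c) * α) := by ring
      _ ≤ m2 * (β * Real.tanh (α * c)) := h2
      _ ≤ m1 * (β * Real.tanh (α * c)) := h3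
      _ = m1 * β * Real.tanh (α * c) := by ring
  · have h1 : Real.tanh (β * c) ≤ Real.tanh (α * c) :=
      my_tanh_mono (by nlinarith)
    calc m2 * α * Real.tanh (β * c) ≤ m1 * β * Real.tanh (β * c) :=
        mul_le_mul_of_nonneg_right hmab htβc
      _ ≤ m1 * β * Real.tanh (α * c) := by
        apply mul_le_mul_of_nonneg_left h1 (mul_nonneg (hm2.trans hm) hβ.le)

set_option maxHeartbeats 1000000 in
theorem warm_star_hr_sufficient (l11 l12 l21 l22 m1 m2 : ℝ)
    (h11 : 0 < l11) (h12 : 0 < l12) (h21 : 0 < l21) (h22 : 0 < l22)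
    (hm1 : 0 < m1) (hm2 : 0 < m2)
    (hlam : l11 ≤ l21) (hmu : m1 ≥ m2) (hcond : l12 * m2 ≤ l22 * m1) :
    ∀ t ≥ (0 : ℝ), rWstar l11 l12 m1 t ≤ rWstar l21 l22 m2 t := by
  intro t ht
  set a1 := aW l11 l12 m1 with ha1
  set a2 := aW l21 l22 m2 with ha2
  have ha1sq : a1 ^ 2 = (l12 + m1) ^ 2 + 4 * l11 * m1 :=
    Real.sq_sqrt (by positivity)
  have ha2sq : a2 ^ 2 = (l22 + m2) ^ 2 + 4 * l21 * m2 :=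
    Real.sq_sqrt (by positivity)
  have ha1pos : 0 < a1 := Real.sqrt_pos.2 (by positivity)
  have ha2pos : 0 < a2 := Real.sqrt_pos.2 (by positivity)
  have ha1ge : l12 + m1 ≤ a1 := by
    rw [ha1, aW]
    exact (Real.le_sqrt (by positivity) (by positivity)).2 (by nlinarith)
  have ha2ge : l22 + m2 ≤ a2 := by
    rw [ha2, aW]
    exact (Real.le_sqrt (by positivity) (by positivity)).2 (by nlinarith)
  set u1 := Real.tanh (a1 * t / 2) with hu1
  set u2 := Real.tanh (a2 * t / 2) with hu2
  have hu1n : 0 ≤ u1 := my_tanh_nonneg (by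
    apply div_nonneg (mul_nonneg ha1pos.le ht) (by norm_num))
  have hu2n : 0 ≤ u2 := my_tanh_nonneg (by
    apply div_nonneg (mul_nonneg ha2pos.le ht) (by norm_num))
  have hu1le : u1 ≤ 1 := my_tanh_le_one _
  have hu2le : u2 ≤ 1 := my_tanh_le_one _
  -- m2 * a1 ≤ m1 * a2
  have hma : m2 * a1 ≤ m1 * a2 := by
    have hA : (l12 * m2) ^ 2 ≤ (l22 * m1) ^ 2 :=
      pow_le_pow_left₀ (by positivity) hcond 2
    have hB : m1 * m2 * (l12 * m2) ≤ m1 * m2 * (l22 * m1) :=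
      mul_le_mul_of_nonneg_left hcond (by positivity)
    have hC : l11 * m2 ≤ l21 * m1 := by nlinarith
    have hD : 4 * m1 * m2 * (l11 * m2) ≤ 4 * m1 * m2 * (l21 * m1) :=
      mul_le_mul_of_nonneg_left hC (by positivity)
    have h : (m2 * a1) ^ 2 ≤ (m1 * a2) ^ 2 := by
      rw [mul_pow, mul_pow, ha1sq, ha2sq]
      nlinarith [hA, hB, hD]
    have hh := Real.sqrt_le_sqrt h
    rwa [Real.sqrt_sq (by positivity), Real.sqrt_sq (by positivity)] at hh
  -- key inequality
  have hkey : m2 * a1 * u2 ≤ m1 * a2 * u1 := by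
    have h := key_tanh a1 a2 (t / 2) m1 m2 ha1pos ha2pos (by linarith) hm2.le hmu hma
    have e1 : a2 * (t / 2) = a2 * t / 2 := by ring
    have e2 : a1 * (t / 2) = a1 * t / 2 := by ring
    rwa [e1, e2, ← hu1, ← hu2] at h
  clear_value u1 u2 a1 a2
  set D1 := a1 + (l12 + m1) * u1 with hD1
  set D2 := a2 + (l22 + m2) * u2 with hD2
  have hD1pos : 0 < D1 := by
    have := mul_nonneg (by linarith : (0:ℝ) ≤ l12 + m1) hu1n
    rw [hD1]; linarith
  have hD2pos : 0 < D2 := by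
    have := mul_nonneg (by linarith : (0:ℝ) ≤ l22 + m2) hu2n
    rw [hD2]; linarith
  set N1 := a1 + (l12 - m1) * u1 with hN1
  set N2 := a2 + (l22 - m2) * u2 with hN2
  have hN1nn : 0 ≤ N1 := by
    rw [hN1]
    nlinarith [mul_nonneg h12.le hu1n, mul_nonneg hm1.le (sub_nonneg.2 hu1le)]
  -- m2 * u2 * D1 ≤ m1 * u1 * D2
  have hstep : m2 * u2 * D1 ≤ m1 * u1 * D2 := by
    rw [hD1, hD2]
    have h1 : l12 * m2 * (u1 * u2) ≤ l22 * m1 * (u1 * u2) :=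
      mul_le_mul_of_nonneg_right hcond (mul_nonneg hu1n hu2n)
    have hq1 : m2 * u2 * (a1 + (l12 + m1) * u1)
        = m2 * a1 * u2 + l12 * m2 * (u1 * u2) + m1 * m2 * (u1 * u2) := by ring
    have hq2 : m1 * u1 * (a2 + (l22 + m2) * u2)
        = m1 * a2 * u1 + l22 * m1 * (u1 * u2) + m1 * m2 * (u1 * u2) := by ring
    linarith [hkey, h1, hq1, hq2]
  have hfrac : N1 / D1 ≤ N2 / D2 := by
    rw [div_le_div_iff₀ hD1pos hD2pos]
    have e1 : N1 = D1 - 2 * m1 * u1 := by rw [hN1, hD1]; ring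
    have e2 : N2 = D2 - 2 * m2 * u2 := by rw [hN2, hD2]; ring
    rw [e1, e2]
    have hq1 : (D1 - 2 * m1 * u1) * D2 = D1 * D2 - 2 * (m1 * u1 * D2) := by ring
    have hq2 : (D2 - 2 * m2 * u2) * D1 = D1 * D2 - 2 * (m2 * u2 * D1) := by ring
    linarith [hstep, hq1, hq2]
  have hmul : l11 * (N1 / D1) ≤ l21 * (N2 / D2) :=
    mul_le_mul hlam hfrac (div_nonneg hN1nn hD1pos.le) h21.le
  have hrw1 : rWstar l11 l12 m1 t = l11 * N1 / D1 := by
    unfold rWstar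
    rw [← ha1, ← hu1, ← hN1, ← hD1]
  have hrw2 : rWstar l21 l22 m2 t = l21 * N2 / D2 := by
    unfold rWstar
    rw [← ha2, ← hu2, ← hN2, ← hD2]
  rw [hrw1, hrw2, mul_div_assoc, mul_div_assoc]
  exact hmul
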